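/- arXiv:1003.0281 — 5 statements merged into one kernel-verified Lean document; each statement's English description precedes it below -/
import Mathlib

section
/- Let V be a finite-dimensional real vector space, Z₁, Z₂ ∈ V, α₁, α₂ : V → ℝ linear functionals with α₁(Z₁) = α₂(Z₂) = 1 and α₁(Z₂) = α₂(Z₁) = 0, and φ : V → V a linear map satisfying φ² = −Id + α₁ ⊗ Z₁ + α₂ ⊗ Z₂ and φ(Z₁) = φ(Z₂) = 0. Suppose g is an inner product on V such that g(X, Z₁) = α₁(X), g(X, Z₂) = α₂(X), and g(X, φY) = ω(X, Y) for all X, Y ∈ V, where ω is some alternating bilinear form on V. Then g(φX, Y) = −g(X, φY) for all X, Y, and g is compatible: g(φX, φY) = g(X, Y) − α₁(X)α₁(Y) − α₂(X)α₂(Y) for all X, Y ∈ V. -/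
/-- An inner product (symmetric positive-definite bilinear form). -/
def IsInnerProduct {V : Type*} [AddCommGroup V] [Module ℝ V]
    (g : V →ₗ[ℝ] V →ₗ[ℝ] ℝ) : Prop :=
  (∀ x y, g x y = g y x) ∧ ∀ x, x ≠ 0 → 0 < g x x

/-- If `g` is an inner product with `g(·, Zᵢ) = αᵢ` and `g(X, φY) = ω(X, Y)` for some
alternating bilinear form `ω`, then `φ` is `g`-skew-adjoint and `g` is compatible:
`g(φX, φY) = g(X, Y) - α₁(X)α₁(Y) - α₂(X)α₂(Y)`. -/
theorem associated_is_compatible {V : Type*} [AddCommGroup V] [Module ℝ V]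
    [FiniteDimensional ℝ V] (Z₁ Z₂ : V) (α₁ α₂ : V →ₗ[ℝ] ℝ) (φ : V →ₗ[ℝ] V)
    (h11 : α₁ Z₁ = 1) (h22 : α₂ Z₂ = 1) (h12 : α₁ Z₂ = 0) (h21 : α₂ Z₁ = 0)
    (hφsq : ∀ X : V, φ (φ X) = -X + α₁ X • Z₁ + α₂ X • Z₂)
    (hφZ₁ : φ Z₁ = 0) (hφZ₂ : φ Z₂ = 0)
    (g : V →ₗ[ℝ] V →ₗ[ℝ] ℝ) (hg : IsInnerProduct g)
    (hgZ₁ : ∀ X : V, g X Z₁ = α₁ X) (hgZ₂ : ∀ X : V, g X Z₂ = α₂ X)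
    (ω : V →ₗ[ℝ] V →ₗ[ℝ] ℝ) (hω : ∀ x : V, ω x x = 0)
    (hgφ : ∀ X Y : V, g X (φ Y) = ω X Y) :
    (∀ X Y : V, g (φ X) Y = -(g X (φ Y))) ∧
      (∀ X Y : V, g (φ X) (φ Y) = g X Y - α₁ X * α₁ Y - α₂ X * α₂ Y) := by
  have hanti : ∀ X Y : V, ω X Y = -(ω Y X) := by
    intro X Y
    have h := hω (X + Y)
    simp [map_add, hω X, hω Y] at h
    linarith
  have hskew : ∀ X Y : V, g (φ X) Y = -(g X (φ Y)) := by
    intro X Y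
    rw [hg.1 (φ X) Y, hgφ, hanti, hgφ]
  refine ⟨hskew, fun X Y => ?_⟩
  rw [hskew X (φ Y), hφsq Y]
  simp [map_add, map_neg, map_smul, hgZ₁, hgZ₂]
  ring
end

section
/- Let (α₁, α₂, β₁, β₂) be a linear contact pair of type (h,k) on a real vector space V of dimension 2h+2k+2, with Reeb vectors Z₁, Z₂. Set F₁ = ker α₁ ∩ ker β₁, F₂ = ker α₂ ∩ ker β₂, G₁ = ker β₁ ∩ ker α₁ ∩ ker α₂ and G₂ = ker β₂ ∩ ker α₁ ∩ ker α₂, where ker β = {v ∈ V : β(v, ·) = 0}. Then V = G₁ ⊕ G₂ ⊕ ℝZ₁ ⊕ ℝZ₂ (internal direct sum), and moreover F₁ = G₁ ⊕ ℝZ₂ and F₂ = G₂ ⊕ ℝZ₁. -/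
open scoped TensorProduct

/-- The wedge product of two real-valued alternating forms (determinant/shuffle convention). -/
noncomputable def wedge {V : Type*} [AddCommGroup V] [Module ℝ V] {a b : ℕ}
    (ω : V [⋀^Fin a]→ₗ[ℝ] ℝ) (η : V [⋀^Fin b]→ₗ[ℝ] ℝ) :
    V [⋀^Fin (a + b)]→ₗ[ℝ] ℝ :=
  AlternatingMap.domDomCongr finSumFinEquiv
    ((TensorProduct.lid ℝ ℝ).toLinearMap.compAlternatingMap (ω.domCoprod η))

/-- A linear functional regarded as an alternating 1-form. -/
noncomputable def oneForm {V : Type*} [AddCommGroup V] [Module ℝ V]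
    (α : V →ₗ[ℝ] ℝ) : V [⋀^Fin 1]→ₗ[ℝ] ℝ :=
  AlternatingMap.ofSubsingleton ℝ V ℝ (0 : Fin 1) α

/-- Wedge powers of an alternating 2-form. -/
noncomputable def wpow {V : Type*} [AddCommGroup V] [Module ℝ V]
    (β : V [⋀^Fin 2]→ₗ[ℝ] ℝ) : (n : ℕ) → V [⋀^Fin (2 * n)]→ₗ[ℝ] ℝ
  | 0 => AlternatingMap.domDomCongr (finCongr (by omega))
      (AlternatingMap.constOfIsEmpty ℝ V (Fin 0) 1)
  | n + 1 => AlternatingMap.domDomCongr (finCongr (by omega : 2 + 2 * n = 2 * (n + 1)))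
      (wedge β (wpow β n))

/-- The top-degree form `α₁ ∧ β₁^h ∧ α₂ ∧ β₂^k`. -/
noncomputable def cpForm {V : Type*} [AddCommGroup V] [Module ℝ V] (h k : ℕ)
    (α₁ α₂ : V →ₗ[ℝ] ℝ) (β₁ β₂ : V [⋀^Fin 2]→ₗ[ℝ] ℝ) :
    V [⋀^Fin (1 + (2 * h + (1 + 2 * k)))]→ₗ[ℝ] ℝ :=
  wedge (oneForm α₁) (wedge (wpow β₁ h) (wedge (oneForm α₂) (wpow β₂ k)))

/-- A linear contact pair of type `(h, k)`:
`α₁ ∧ β₁^h ∧ α₂ ∧ β₂^k ≠ 0`, `β₁^(h+1) = 0` and `β₂^(k+1) = 0`. -/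
structure IsLinearContactPair {V : Type*} [AddCommGroup V] [Module ℝ V] (h k : ℕ)
    (α₁ α₂ : V →ₗ[ℝ] ℝ) (β₁ β₂ : V [⋀^Fin 2]→ₗ[ℝ] ℝ) : Prop where
  top_ne_zero : cpForm h k α₁ α₂ β₁ β₂ ≠ 0
  pow_fst : wpow β₁ (h + 1) = 0
  pow_snd : wpow β₂ (k + 1) = 0

/-- The Reeb conditions for a pair of vectors `(Z₁, Z₂)`:
`α₁(Z₁) = α₂(Z₂) = 1`, `α₁(Z₂) = α₂(Z₁) = 0` and `β₁(Zᵢ, ·) = β₂(Zᵢ, ·) = 0`. -/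
def IsReebPair {V : Type*} [AddCommGroup V] [Module ℝ V]
    (α₁ α₂ : V →ₗ[ℝ] ℝ) (β₁ β₂ : V [⋀^Fin 2]→ₗ[ℝ] ℝ) (Z₁ Z₂ : V) : Prop :=
  α₁ Z₁ = 1 ∧ α₂ Z₂ = 1 ∧ α₁ Z₂ = 0 ∧ α₂ Z₁ = 0 ∧
    β₁.curryLeft Z₁ = 0 ∧ β₂.curryLeft Z₁ = 0 ∧ β₁.curryLeft Z₂ = 0 ∧ β₂.curryLeft Z₂ = 0

/-!
A vector killed by `α₁`, `α₂`, `β₁(·, ·)` and `β₂(·, ·)` is killed by the volume form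
`α₁ ∧ β₁^h ∧ α₂ ∧ β₂^k ≠ 0`, so it vanishes: `G₁ ∩ G₂ = 0`. A 2-form of rank `≥ 2m + 2` admits a
symplectic family `e₀, f₀, …, e_m, f_m`, on which its `(m + 1)`-st power takes the value `(m + 1)!`;
so `β₁^(h+1) = 0` forces `rank β₁ ≤ 2h`, hence `dim G₁ ≥ 2k`, and likewise `dim G₂ ≥ 2h`. Thus
`G₁ ⊕ G₂` fills `ker α₁ ∩ ker α₂`, which has dimension `2h + 2k` and is complementary to
`ℝZ₁ ⊕ ℝZ₂`. Subtracting `α₂(v) Z₂`, resp. `α₁(v) Z₁`, splits `F₁`, resp. `F₂`.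
-/

open Module

theorem iSupIndep_of_sum_eq_zero {R N ι : Type*} [Ring R] [AddCommGroup N] [Module R N]
    [Fintype ι] {p : ι → Submodule R N}
    (h : ∀ v : ι → N, (∀ i, v i ∈ p i) → ∑ i, v i = 0 → ∀ i, v i = 0) : iSupIndep p := by
  classical
  rw [iSupIndep_iff_finsetSum_eq_zero_imp_eq_zero]
  intro s v hv hsum i hi
  have := h (fun j => if j ∈ s then v j else 0)
    (fun j => by split_ifs with hj; exacts [hv j hj, zero_mem _])
    (by rw [Finset.sum_ite_mem, Finset.univ_inter, hsum]) i
  simpa [hi] using this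

section LinearAlgebra

variable {K V : Type*} [Field K] [AddCommGroup V] [Module K V]

theorem finrank_le_finrank_inf_ker_add_one [FiniteDimensional K V] (p : Submodule K V)
    (φ : V →ₗ[K] K) : finrank K p ≤ finrank K ↥(p ⊓ LinearMap.ker φ) + 1 := by
  have hrank := LinearMap.finrank_range_add_finrank_ker (φ ∘ₗ p.subtype)
  have hrange : finrank K (LinearMap.range (φ ∘ₗ p.subtype)) ≤ 1 := by
    simpa using (LinearMap.range (φ ∘ₗ p.subtype)).finrank_le
  rw [LinearMap.ker_comp, ← Submodule.finrank_map_subtype_eq, Submodule.map_comap_subtype] at hrank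
  omega

theorem sup_eq_of_disjoint_of_finrank_le [FiniteDimensional K V] {G₁ G₂ W : Submodule K V}
    (h₁ : G₁ ≤ W) (h₂ : G₂ ≤ W) (hdisj : Disjoint G₁ G₂)
    (hle : finrank K W ≤ finrank K G₁ + finrank K G₂) : G₁ ⊔ G₂ = W := by
  refine Submodule.eq_of_le_of_finrank_le (sup_le h₁ h₂) ?_
  rw [← Nat.add_zero (finrank K ↥(G₁ ⊔ G₂)), ← finrank_bot K V, ← hdisj.eq_bot,
    Submodule.finrank_sup_add_finrank_inf_eq]
  exact hle

section DualPair

variable {α₁ α₂ : V →ₗ[K] K} {Z₁ Z₂ : V}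

open Submodule LinearMap

theorem disjoint_ker_span_singleton {α : V →ₗ[K] K} {Z : V} (hZ : α Z = 1) :
    Disjoint (ker α) (span K {Z}) := by
  rw [disjoint_def]
  intro x hx hxZ
  obtain ⟨c, rfl⟩ := mem_span_singleton.mp hxZ
  simp_all

theorem inf_ker_sup_span_singleton_eq {P : Submodule K V} {α : V →ₗ[K] K} {Z : V} (hZP : Z ∈ P)
    (hZ : α Z = 1) : P ⊓ ker α ⊔ span K {Z} = P := by
  refine le_antisymm (sup_le inf_le_left ((span_singleton_le_iff_mem _ _).mpr hZP)) fun v hv => ?_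
  rw [← sub_add_cancel v (α v • Z)]
  exact add_mem_sup ⟨P.sub_mem hv (P.smul_mem _ hZP), by simp [hZ]⟩
    (smul_mem _ _ (mem_span_singleton_self Z))

variable (h₁₁ : α₁ Z₁ = 1) (h₂₂ : α₂ Z₂ = 1) (h₁₂ : α₁ Z₂ = 0) (h₂₁ : α₂ Z₁ = 0)
include h₁₁ h₂₂ h₁₂ h₂₁

theorem sub_smul_sub_smul_mem_ker_inf_ker (v : V) :
    v - α₁ v • Z₁ - α₂ v • Z₂ ∈ ker α₁ ⊓ ker α₂ := by
  simp [h₁₁, h₂₂, h₁₂, h₂₁]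

theorem finrank_ker_inf_ker_add_two [FiniteDimensional K V] :
    finrank K ↥(ker α₁ ⊓ ker α₂) + 2 = finrank K V := by
  have hsurj : range (α₁.prod α₂) = ⊤ := by
    refine eq_top_iff.mpr fun ⟨a, b⟩ _ => ⟨a • Z₁ + b • Z₂, ?_⟩
    simp [h₁₁, h₂₂, h₁₂, h₂₁]
  have := finrank_range_add_finrank_ker (α₁.prod α₂)
  rw [hsurj, finrank_top, ker_prod, Module.finrank_prod, Module.finrank_self] at this
  omega

theorem isInternal_of_sup_eq_ker_inf_ker {G₁ G₂ : Submodule K V} (hdisj : Disjoint G₁ G₂)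
    (hsup : G₁ ⊔ G₂ = ker α₁ ⊓ ker α₂) :
    DirectSum.IsInternal ![G₁, G₂, span K {Z₁}, span K {Z₂}] := by
  have hG₁ : G₁ ≤ ker α₁ ⊓ ker α₂ := hsup ▸ le_sup_left
  have hG₂ : G₂ ≤ ker α₁ ⊓ ker α₂ := hsup ▸ le_sup_right
  rw [DirectSum.isInternal_submodule_iff_iSupIndep_and_iSup_eq_top]
  constructor
  · refine iSupIndep_of_sum_eq_zero fun v hv hsum => ?_
    obtain ⟨a, ha⟩ := mem_span_singleton.mp (hv 2)
    obtain ⟨b, hb⟩ := mem_span_singleton.mp (hv 3)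
    obtain ⟨hv₀₁, hv₀₂⟩ : α₁ (v 0) = 0 ∧ α₂ (v 0) = 0 := hG₁ (hv 0)
    obtain ⟨hv₁₁, hv₁₂⟩ : α₁ (v 1) = 0 ∧ α₂ (v 1) = 0 := hG₂ (hv 1)
    rw [Fin.sum_univ_four, ← ha, ← hb] at hsum
    have ha0 : a = 0 := by simpa [hv₀₁, hv₁₁, h₁₁, h₁₂] using congrArg α₁ hsum
    have hb0 : b = 0 := by simpa [hv₀₂, hv₁₂, h₂₁, h₂₂] using congrArg α₂ hsum
    subst ha0 hb0
    simp only [zero_smul, add_zero] at hsum ha hb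
    have h₀ : v 0 = 0 := disjoint_def.mp hdisj _ (hv 0)
      (by rw [eq_neg_of_add_eq_zero_left hsum]; exact neg_mem (hv 1))
    intro i
    fin_cases i
    · exact h₀
    · simpa [h₀] using hsum
    · exact ha.symm
    · exact hb.symm
  · refine eq_top_iff.mpr fun v _ => ?_
    obtain ⟨g₁, hg₁, g₂, hg₂, hg⟩ :=
      mem_sup.mp (hsup ▸ sub_smul_sub_smul_mem_ker_inf_ker h₁₁ h₂₂ h₁₂ h₂₁ v)
    have hmem i (x : V) (hx : x ∈ ![G₁, G₂, span K {Z₁}, span K {Z₂}] i) :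
        x ∈ ⨆ i, ![G₁, G₂, span K {Z₁}, span K {Z₂}] i := mem_iSup_of_mem i hx
    rw [show v = g₁ + g₂ + α₁ v • Z₁ + α₂ v • Z₂ by rw [hg]; abel]
    exact add_mem (add_mem (add_mem (hmem 0 _ hg₁) (hmem 1 _ hg₂))
      (hmem 2 _ (smul_mem _ _ (mem_span_singleton_self _))))
      (hmem 3 _ (smul_mem _ _ (mem_span_singleton_self _)))

end DualPair

end LinearAlgebra

section Symplectic

variable {K V : Type*} [Field K] [AddCommGroup V] [Module K V] (B : LinearMap.BilinForm K V)

def IsSymplecticFamily {m : ℕ} (e f : Fin m → V) : Prop :=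
  ∀ i j, B (e i) (e j) = 0 ∧ B (f i) (f j) = 0 ∧ B (e i) (f j) = if i = j then 1 else 0

variable {B}

theorem IsSymplecticFamily.comp_injective {m n : ℕ} {e f : Fin m → V}
    (hs : IsSymplecticFamily B e f) {g : Fin n → Fin m} (hg : Function.Injective g) :
    IsSymplecticFamily B (e ∘ g) (f ∘ g) := fun i j => by
  simpa [hg.eq_iff] using hs (g i) (g j)

theorem IsSymplecticFamily.cons (hB : B.IsAlt) {m : ℕ} {e f : Fin m → V}
    (hs : IsSymplecticFamily B e f) {e₀ f₀ : V} (h₀ : B e₀ f₀ = 1)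
    (he : ∀ i, B e₀ (e i) = 0 ∧ B f₀ (e i) = 0) (hf : ∀ i, B e₀ (f i) = 0 ∧ B f₀ (f i) = 0) :
    IsSymplecticFamily B (Fin.cons e₀ e) (Fin.cons f₀ f) := by
  have he' i : B (e i) e₀ = 0 ∧ B (e i) f₀ = 0 := ⟨hB.eq_iff.mp (he i).1, hB.eq_iff.mp (he i).2⟩
  have hf' i : B (f i) e₀ = 0 ∧ B (f i) f₀ = 0 := ⟨hB.eq_iff.mp (hf i).1, hB.eq_iff.mp (hf i).2⟩
  intro i j
  cases i using Fin.cases <;> cases j using Fin.cases <;>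
    simp [hB.self_eq_zero, h₀, he, hf, he', hf', hs _ _, Fin.succ_ne_zero,
      (Fin.succ_ne_zero _).symm]

theorem sub_smul_add_smul_mem_ker_inf_ker (hB : B.IsAlt) {e f : V} (hef : B e f = 1) (x : V) :
    x - B x f • e + B x e • f ∈ LinearMap.ker (B e) ⊓ LinearMap.ker (B f) := by
  have hfe : B f e = -1 := by rw [← LinearMap.IsAlt.neg hB e f, hef]
  simp only [Submodule.mem_inf, LinearMap.mem_ker, map_add, map_sub, map_smul, smul_eq_mul,
    hB.self_eq_zero, hef, hfe, ← LinearMap.IsAlt.neg hB e x, ← LinearMap.IsAlt.neg hB f x]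
  constructor <;> ring

theorem inf_orthogonal_le_of_apply_eq_one (hB : B.IsAlt) {W : Submodule K V} {e f : V}
    (he : e ∈ W) (hf : f ∈ W) (hef : B e f = 1) :
    letI W' := W ⊓ (LinearMap.ker (B e) ⊓ LinearMap.ker (B f))
    W' ⊓ B.orthogonal W' ≤ W ⊓ B.orthogonal W := by
  rintro w ⟨⟨hwW, hwe, hwf⟩, hwW'⟩
  refine ⟨hwW, fun x hx => ?_⟩
  have hx' : x - B x f • e + B x e • f ∈ W ⊓ (LinearMap.ker (B e) ⊓ LinearMap.ker (B f)) :=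
    ⟨W.add_mem (W.sub_mem hx (W.smul_mem _ he)) (W.smul_mem _ hf),
      sub_smul_add_smul_mem_ker_inf_ker hB hef x⟩
  simp only [SetLike.mem_coe, LinearMap.mem_ker] at hwe hwf
  simpa [hwe, hwf] using hwW' _ hx'

/- The hypothesis says that `B` has rank at least `2m - 1` on `W`; asking for one less than `2m`
lets `finrank V > finrank (ker β) + 2m` be fed in at `W = ⊤` without knowing that the rank of an
alternating form is even. -/
theorem exists_isSymplecticFamily [FiniteDimensional K V] (hB : B.IsAlt) (m : ℕ)
    (W : Submodule K V) (hW : finrank K ↥(W ⊓ B.orthogonal W) + 2 * m ≤ finrank K W + 1) :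
    ∃ e f : Fin m → V, (∀ i, e i ∈ W ∧ f i ∈ W) ∧ IsSymplecticFamily B e f := by
  induction m generalizing W with
  | zero => exact ⟨Fin.elim0, Fin.elim0, fun i => i.elim0, fun i => i.elim0⟩
  | succ m ih =>
    obtain ⟨e, heW, he⟩ : ∃ e ∈ W, e ∉ W ⊓ B.orthogonal W := by
      refine SetLike.exists_of_lt (lt_of_le_of_ne inf_le_left fun hEq => ?_)
      rw [hEq] at hW
      omega
    obtain ⟨x, hxW, hx⟩ : ∃ x ∈ W, B e x ≠ 0 := by
      by_contra! hcon
      exact he ⟨heW, fun x hx => hB.eq_iff.mp (hcon x hx)⟩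
    obtain ⟨f, hfW, hef⟩ : ∃ f ∈ W, B e f = 1 := ⟨(B e x)⁻¹ • x, W.smul_mem _ hxW, by simp [hx]⟩
    have hW' : finrank K W ≤
        finrank K ↥(W ⊓ (LinearMap.ker (B e) ⊓ LinearMap.ker (B f))) + 2 := by
      have h₁ := finrank_le_finrank_inf_ker_add_one W (B e)
      have h₂ := finrank_le_finrank_inf_ker_add_one (W ⊓ LinearMap.ker (B e)) (B f)
      rw [inf_assoc] at h₂
      omega
    have hrad := Submodule.finrank_mono
      (inf_orthogonal_le_of_apply_eq_one hB heW hfW hef)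
    obtain ⟨e', f', hW'mem, hs⟩ := ih (W ⊓ (LinearMap.ker (B e) ⊓ LinearMap.ker (B f))) (by omega)
    refine ⟨Fin.cons e e', Fin.cons f f', fun i => ?_, hs.cons hB hef
      (fun i => (hW'mem i).1.2) (fun i => (hW'mem i).2.2)⟩
    cases i using Fin.cases
    · exact ⟨heW, hfW⟩
    · exact ⟨(hW'mem _).1.1, (hW'mem _).2.1⟩

end Symplectic

section Combinatorics

variable {V : Type*}

open Equiv

def interleave {m : ℕ} (e f : Fin m → V) : Fin (2 * m) → V := fun i =>
  if (i : ℕ) % 2 = 0 then e ⟨i / 2, by omega⟩ else f ⟨i / 2, by omega⟩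

theorem interleave_apply_of_div_two_eq {m : ℕ} (e f : Fin m → V) {i : Fin (2 * m)} {l : Fin m}
    (h : (i : ℕ) / 2 = l) : interleave e f i = if (i : ℕ) % 2 = 0 then e l else f l := by
  unfold interleave
  split_ifs <;> exact congrArg _ (Fin.ext h)

def pairSwap {m : ℕ} (l : Fin (m + 1)) : Perm (Fin (2 + 2 * m)) :=
  swap ⟨0, by omega⟩ ⟨2 * (l : ℕ), by omega⟩ * swap ⟨1, by omega⟩ ⟨2 * (l : ℕ) + 1, by omega⟩

theorem val_pairSwap {m : ℕ} (l : Fin (m + 1)) (p : Fin (2 + 2 * m)) :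
    (pairSwap l p : ℕ) =
      if (p : ℕ) = 0 then 2 * (l : ℕ)
      else if (p : ℕ) = 1 then 2 * (l : ℕ) + 1
      else if (p : ℕ) = 2 * (l : ℕ) then 0
      else if (p : ℕ) = 2 * (l : ℕ) + 1 then 1
      else (p : ℕ) := by
  simp only [pairSwap, Perm.mul_apply, swap_apply_def, Fin.ext_iff]
  split_ifs <;> simp_all; omega

theorem sign_pairSwap {m : ℕ} (l : Fin (m + 1)) : Perm.sign (pairSwap l) = 1 := by
  rw [pairSwap, map_mul, Perm.sign_swap', Perm.sign_swap']
  simp only [Fin.ext_iff]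
  split_ifs <;> first | omega | decide

theorem val_swap_zero_apply {m : ℕ} (l k : Fin (m + 1)) :
    (swap 0 l k : ℕ) = if (k : ℕ) = 0 then (l : ℕ) else if (k : ℕ) = l then 0 else (k : ℕ) := by
  simp only [swap_apply_def, Fin.ext_iff, Fin.val_zero]
  split_ifs <;> rfl

theorem interleave_pairSwap_natAdd {m : ℕ} (e f : Fin (m + 1) → V) (h : 2 + 2 * m = 2 * (m + 1))
    (l : Fin (m + 1)) (j : Fin (2 * m)) :
    interleave e f (finCongr h (pairSwap l (Fin.natAdd 2 j))) =
      interleave (e ∘ swap 0 l ∘ Fin.succ) (f ∘ swap 0 l ∘ Fin.succ) j := by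
  obtain ⟨k, hk⟩ : ∃ k : Fin m, (k : ℕ) = j / 2 := ⟨⟨j / 2, by omega⟩, rfl⟩
  have hP : (pairSwap l (Fin.natAdd 2 j) : ℕ) / 2 = (swap 0 l k.succ : ℕ) ∧
      (pairSwap l (Fin.natAdd 2 j) : ℕ) % 2 = (j : ℕ) % 2 := by
    have h₁ := val_pairSwap l (Fin.natAdd 2 j)
    have h₂ := val_swap_zero_apply l k.succ
    simp only [Fin.val_natAdd, Fin.val_succ, Nat.add_one_ne_zero, if_false] at h₁ h₂
    constructor <;> split_ifs at h₁ h₂ <;> omega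
  rw [interleave_apply_of_div_two_eq _ _ (l := swap 0 l k.succ) (by simpa using hP.1),
    interleave_apply_of_div_two_eq _ _ (l := k) hk.symm]
  simp [hP.2]

theorem modSumCongr_mk_eq_mk_iff {α β : Type*} [Finite α] [Finite β] (σ τ : Perm (α ⊕ β)) :
    (Quotient.mk'' σ : Perm.ModSumCongr α β) = Quotient.mk'' τ ↔
      ∀ a, ∃ a', τ (.inl a) = σ (.inl a') := by
  rw [Quotient.eq'', QuotientGroup.leftRel_apply]
  constructor
  · rintro ⟨⟨sl, sr⟩, h⟩ a
    refine ⟨sl a, ?_⟩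
    rw [← mul_inv_cancel_left σ τ, ← h]
    simp [Perm.sumCongrHom]
  · intro h
    apply Perm.mem_sumCongrHom_range_of_perm_mapsTo_inl
    rintro _ ⟨a, rfl⟩
    obtain ⟨a', ha'⟩ := h a
    exact ⟨a', by simp [ha']⟩

theorem val_pairSwap_castAdd {m : ℕ} (l : Fin (m + 1)) (a : Fin 2) :
    (pairSwap l (Fin.castAdd (2 * m) a) : ℕ) = 2 * l + a := by
  rw [val_pairSwap]
  fin_cases a <;> simp

def pairClass {m : ℕ} (l : Fin (m + 1)) : Perm.ModSumCongr (Fin 2) (Fin (2 * m)) :=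
  Quotient.mk'' (finSumFinEquiv.symm.permCongr (pairSwap l))

theorem pairClass_injective {m : ℕ} : Function.Injective (pairClass (m := m)) := by
  intro l l' h
  obtain ⟨a, ha⟩ := (modSumCongr_mk_eq_mk_iff _ _).mp h 0
  have := congrArg (fun x => (finSumFinEquiv x : ℕ)) ha
  simp only [permCongr_apply, symm_symm, apply_symm_apply, finSumFinEquiv_apply_left,
    val_pairSwap_castAdd] at this
  have := a.isLt
  ext
  omega

end Combinatorics

section Forms

variable {V : Type*} [AddCommGroup V] [Module ℝ V]

open Equiv

theorem wedge_apply {a b : ℕ} (ω : V [⋀^Fin a]→ₗ[ℝ] ℝ) (η : V [⋀^Fin b]→ₗ[ℝ] ℝ)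
    (u : Fin (a + b) → V) :
    wedge ω η u = ∑ q : Perm.ModSumCongr (Fin a) (Fin b),
      TensorProduct.lid ℝ ℝ (AlternatingMap.domCoprod.summand ω η q (u ∘ finSumFinEquiv)) := by
  simp only [wedge, AlternatingMap.domDomCongr_apply, LinearMap.compAlternatingMap_apply,
    AlternatingMap.domCoprod_apply, FunLike.coe_sum, Finset.sum_apply, map_sum]
  rfl

theorem lid_summand_mk {a b : ℕ} (ω : V [⋀^Fin a]→ₗ[ℝ] ℝ) (η : V [⋀^Fin b]→ₗ[ℝ] ℝ)
    (σ : Perm (Fin a ⊕ Fin b)) (u : Fin a ⊕ Fin b → V) :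
    TensorProduct.lid ℝ ℝ (AlternatingMap.domCoprod.summand ω η (Quotient.mk'' σ) u) =
      Perm.sign σ • (ω (fun i => u (σ (.inl i))) * η (fun j => u (σ (.inr j)))) := by
  simp [AlternatingMap.domCoprod.summand_mk'', MultilinearMap.domDomCongr_apply,
    MultilinearMap.domCoprod_apply]

def formKer {p : ℕ} (ω : V [⋀^Fin p]→ₗ[ℝ] ℝ) : Set V :=
  {v | ∀ (u : Fin p → V) (i : Fin p), u i = v → ω u = 0}

theorem wedge_mem_formKer {a b : ℕ} {ω : V [⋀^Fin a]→ₗ[ℝ] ℝ} {η : V [⋀^Fin b]→ₗ[ℝ] ℝ} {v : V}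
    (hω : v ∈ formKer ω) (hη : v ∈ formKer η) : v ∈ formKer (wedge ω η) := by
  rintro u i rfl
  rw [wedge_apply]
  refine Finset.sum_eq_zero fun q _ => ?_
  induction q using Quotient.inductionOn' with | h σ => ?_
  rw [lid_summand_mk]
  obtain ⟨x, hx⟩ | ⟨y, hy⟩ : (∃ x, σ (.inl x) = finSumFinEquiv.symm i) ∨
      ∃ y, σ (.inr y) = finSumFinEquiv.symm i := by
    rcases h : σ.symm (finSumFinEquiv.symm i) with x | y
    · exact .inl ⟨x, by rw [← h, Equiv.apply_symm_apply]⟩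
    · exact .inr ⟨y, by rw [← h, Equiv.apply_symm_apply]⟩
  · rw [hω _ x (by simp [hx]), zero_mul, smul_zero]
  · rw [hη _ y (by simp [hy]), mul_zero, smul_zero]

theorem mem_formKer_oneForm {α : V →ₗ[ℝ] ℝ} {v : V} (hv : α v = 0) : v ∈ formKer (oneForm α) := by
  rintro u i rfl
  obtain rfl := Subsingleton.elim i 0
  simpa [oneForm] using hv

theorem mem_formKer_of_curryLeft_eq_zero {β : V [⋀^Fin 2]→ₗ[ℝ] ℝ} {v : V}
    (hv : β.curryLeft v = 0) : v ∈ formKer β := by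
  have key : ∀ u : Fin 2 → V, u 0 = v → β u = 0 := fun u h0 => by
    rw [← Fin.cons_self_tail u, h0]
    exact DFunLike.congr_fun hv (Fin.tail u)
  rintro u i rfl
  fin_cases i
  · exact key u rfl
  · rw [← neg_eq_zero, ← β.map_swap u (by decide : (0 : Fin 2) ≠ 1)]
    exact key _ (by simp)

theorem mem_formKer_wpow {β : V [⋀^Fin 2]→ₗ[ℝ] ℝ} {v : V} (hv : β.curryLeft v = 0) (m : ℕ) :
    v ∈ formKer (wpow β m) := by
  induction m with
  | zero => exact fun _ i => i.elim0
  | succ m ih =>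
    rintro u i rfl
    exact wedge_mem_formKer (mem_formKer_of_curryLeft_eq_zero hv) ih _ (finCongr (by omega) i)
      (by simp)

theorem eq_zero_of_mem_formKer [FiniteDimensional ℝ V] {p : ℕ} {Ω : V [⋀^Fin p]→ₗ[ℝ] ℝ}
    (hΩ : Ω ≠ 0) (hp : finrank ℝ V = p) {v : V} (hv : v ∈ formKer Ω) : v = 0 := by
  by_contra hv0
  have hli : LinearIndepOn ℝ id ({v} : Set V) := .singleton hv0
  let b := Basis.extend hli
  let e := b.indexEquiv (finBasisOfFinrankEq ℝ V hp)
  apply hΩ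
  rw [Ω.eq_smul_basis_det (b.reindex e), hv _ (e ⟨v, Basis.subset_extend hli rfl⟩) (by simp [b]),
    zero_smul]

def twoFormBilin (β : V [⋀^Fin 2]→ₗ[ℝ] ℝ) : LinearMap.BilinForm ℝ V :=
  LinearMap.mk₂ ℝ (fun x y => β ![x, y]) (fun _ _ _ => β.map_vecCons_add _ _ _)
    (fun _ _ _ => β.map_vecCons_smul _ _ _)
    (fun x _ _ => (β.curryLeft x).map_vecCons_add _ _ _)
    (fun _ x _ => (β.curryLeft x).map_vecCons_smul _ _ _)

theorem twoFormBilin_apply (β : V [⋀^Fin 2]→ₗ[ℝ] ℝ) (x y : V) :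
    twoFormBilin β x y = β ![x, y] := rfl

theorem isAlt_twoFormBilin (β : V [⋀^Fin 2]→ₗ[ℝ] ℝ) : (twoFormBilin β).IsAlt := fun x =>
  β.map_eq_zero_of_eq ![x, x] (i := 0) (j := 1) rfl (by decide)

theorem orthogonal_top_twoFormBilin (β : V [⋀^Fin 2]→ₗ[ℝ] ℝ) :
    (twoFormBilin β).orthogonal ⊤ = LinearMap.ker β.curryLeft := by
  ext v
  simp only [LinearMap.BilinForm.mem_orthogonal_iff, Submodule.mem_top, true_implies,
    LinearMap.mem_ker, (isAlt_twoFormBilin β).eq_iff (x := _) (y := v)]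
  refine ⟨fun h => AlternatingMap.ext fun w => ?_, fun h n => ?_⟩
  · rw [show w = ![w 0] from funext fun i => by fin_cases i; rfl]
    exact h (w 0)
  · exact DFunLike.congr_fun h ![n]

theorem apply_eq_twoFormBilin (β : V [⋀^Fin 2]→ₗ[ℝ] ℝ) (u : Fin 2 → V) :
    β u = twoFormBilin β (u 0) (u 1) := by
  rw [twoFormBilin_apply]
  congr 1
  ext i
  fin_cases i <;> rfl

theorem div_two_eq_of_twoFormBilin_interleave_ne_zero {β : V [⋀^Fin 2]→ₗ[ℝ] ℝ} {n : ℕ}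
    {e f : Fin n → V} (hs : IsSymplecticFamily (twoFormBilin β) e f) {p p' : Fin (2 * n)}
    (h : twoFormBilin β (interleave e f p) (interleave e f p') ≠ 0) :
    (p : ℕ) / 2 = (p' : ℕ) / 2 := by
  obtain ⟨a, ha⟩ : ∃ a : Fin n, (p : ℕ) / 2 = a := ⟨⟨p / 2, by omega⟩, rfl⟩
  obtain ⟨a', ha'⟩ : ∃ a' : Fin n, (p' : ℕ) / 2 = a' := ⟨⟨p' / 2, by omega⟩, rfl⟩
  rw [interleave_apply_of_div_two_eq _ _ ha, interleave_apply_of_div_two_eq _ _ ha'] at h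
  rw [ha, ha']
  by_contra hne
  have hne' : a ≠ a' := fun h => hne (congrArg Fin.val h)
  split_ifs at h
  · exact h (hs a a').1
  · exact h (by rw [(hs a a').2.2, if_neg hne'])
  · exact h (by rw [← LinearMap.IsAlt.neg (isAlt_twoFormBilin β), (hs a' a).2.2,
      if_neg hne'.symm, neg_zero])
  · exact h (hs a a').2.1

def interleaveSplit {m : ℕ} (e f : Fin (m + 1) → V) : Fin 2 ⊕ Fin (2 * m) → V :=
  fun x => interleave e f (finCongr (by omega) (finSumFinEquiv x))

theorem wpow_succ_interleave_eq_sum (β : V [⋀^Fin 2]→ₗ[ℝ] ℝ) {m : ℕ} (e f : Fin (m + 1) → V) :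
    wpow β (m + 1) (interleave e f) = ∑ q : Perm.ModSumCongr (Fin 2) (Fin (2 * m)),
      TensorProduct.lid ℝ ℝ
        (AlternatingMap.domCoprod.summand β (wpow β m) q (interleaveSplit e f)) := by
  rw [wpow, AlternatingMap.domDomCongr_apply, wedge_apply]
  rfl

theorem lid_summand_pairClass (β : V [⋀^Fin 2]→ₗ[ℝ] ℝ) {m : ℕ} (η : V [⋀^Fin (2 * m)]→ₗ[ℝ] ℝ)
    (e f : Fin (m + 1) → V) (l : Fin (m + 1)) :
    TensorProduct.lid ℝ ℝ
        (AlternatingMap.domCoprod.summand β η (pairClass l) (interleaveSplit e f)) =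
      β ![e l, f l] * η (interleave (e ∘ swap 0 l ∘ Fin.succ) (f ∘ swap 0 l ∘ Fin.succ)) := by
  rw [pairClass, lid_summand_mk, Perm.sign_permCongr, sign_pairSwap, one_smul]
  congr 2
  · ext a
    simp only [interleaveSplit, permCongr_apply, symm_symm, apply_symm_apply,
      finSumFinEquiv_apply_left]
    rw [interleave_apply_of_div_two_eq _ _ (l := l) (by simp [val_pairSwap_castAdd]; omega)]
    fin_cases a <;> simp [val_pairSwap_castAdd]
  · ext j
    simp only [interleaveSplit, permCongr_apply, symm_symm, apply_symm_apply,
      finSumFinEquiv_apply_right]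
    exact interleave_pairSwap_natAdd e f _ l j

theorem lid_summand_eq_zero_of_forall_ne_pairClass {β : V [⋀^Fin 2]→ₗ[ℝ] ℝ} {m : ℕ}
    (η : V [⋀^Fin (2 * m)]→ₗ[ℝ] ℝ) {e f : Fin (m + 1) → V}
    (hs : IsSymplecticFamily (twoFormBilin β) e f) {q : Perm.ModSumCongr (Fin 2) (Fin (2 * m))}
    (hq : ∀ l, pairClass l ≠ q) :
    TensorProduct.lid ℝ ℝ (AlternatingMap.domCoprod.summand β η q (interleaveSplit e f)) = 0 := by
  induction q using Quotient.inductionOn' with | h σ => ?_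
  rw [lid_summand_mk, apply_eq_twoFormBilin]
  by_contra hne
  have hB := left_ne_zero_of_mul (right_ne_zero_of_smul hne)
  have hpos := div_two_eq_of_twoFormBilin_interleave_ne_zero hs hB
  simp only [finCongr_apply, Fin.val_cast] at hpos
  apply hq ⟨(finSumFinEquiv (σ (.inl 0)) : ℕ) / 2, by
    have := (finSumFinEquiv (σ (.inl 0))).isLt; omega⟩
  rw [pairClass, modSumCongr_mk_eq_mk_iff]
  intro a
  refine ⟨⟨(finSumFinEquiv (σ (.inl a)) : ℕ) % 2, by omega⟩, finSumFinEquiv.injective (Fin.ext ?_)⟩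
  simp only [permCongr_apply, symm_symm, apply_symm_apply, finSumFinEquiv_apply_left,
    val_pairSwap_castAdd]
  fin_cases a <;> simp only [Fin.zero_eta, Fin.mk_one] <;> omega

/- In the shuffle expansion of `β ∧ β^m` on `(e₀, f₀, …, e_m, f_m)` only the classes `pairClass l`,
which feed `(e l, f l)` to `β`, survive, and each contributes `m!` by induction. -/
theorem wpow_interleave (β : V [⋀^Fin 2]→ₗ[ℝ] ℝ) :
    ∀ {m : ℕ} {e f : Fin m → V}, IsSymplecticFamily (twoFormBilin β) e f →
      wpow β m (interleave e f) = m.factorial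
  | 0, _, _, _ => by simp [wpow]
  | m + 1, e, f, hs => by
    rw [wpow_succ_interleave_eq_sum,
      ← Finset.sum_subset (Finset.subset_univ (Finset.univ.image pairClass)) fun q _ hq =>
        lid_summand_eq_zero_of_forall_ne_pairClass _ hs (by simpa using hq),
      Finset.sum_image pairClass_injective.injOn]
    calc ∑ l, TensorProduct.lid ℝ ℝ
          (AlternatingMap.domCoprod.summand β (wpow β m) (pairClass l) (interleaveSplit e f))
        = ∑ _l : Fin (m + 1), (m.factorial : ℝ) := Finset.sum_congr rfl fun l _ => by
          rw [lid_summand_pairClass, ← twoFormBilin_apply, (hs l l).2.2, if_pos rfl, one_mul,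
            wpow_interleave β
              (hs.comp_injective ((swap 0 l).injective.comp (Fin.succ_injective _)))]
      _ = (m + 1).factorial := by simp [Nat.factorial_succ]

theorem finrank_le_finrank_ker_curryLeft_add [FiniteDimensional ℝ V] {β : V [⋀^Fin 2]→ₗ[ℝ] ℝ}
    {m : ℕ} (h : wpow β (m + 1) = 0) :
    finrank ℝ V ≤ finrank ℝ (LinearMap.ker β.curryLeft) + 2 * m := by
  by_contra! hlt
  obtain ⟨e, f, -, hs⟩ := exists_isSymplecticFamily (isAlt_twoFormBilin β) (m + 1) ⊤
    (by rw [top_inf_eq, orthogonal_top_twoFormBilin, finrank_top]; omega)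
  have := wpow_interleave β hs
  rw [h, AlternatingMap.zero_apply] at this
  exact Nat.factorial_ne_zero _ (by exact_mod_cast this.symm)

theorem finrank_le_finrank_ker_curryLeft_inf_add [FiniteDimensional ℝ V]
    {β : V [⋀^Fin 2]→ₗ[ℝ] ℝ} {m : ℕ} (h : wpow β (m + 1) = 0) (W : Submodule ℝ V) :
    finrank ℝ W ≤ finrank ℝ ↥(LinearMap.ker β.curryLeft ⊓ W) + 2 * m := by
  have := finrank_le_finrank_ker_curryLeft_add h
  have := Submodule.finrank_sup_add_finrank_inf_eq (LinearMap.ker β.curryLeft) W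
  have := (LinearMap.ker β.curryLeft ⊔ W).finrank_le
  omega

end Forms

theorem IsLinearContactPair.eq_zero_of_apply_eq_zero {V : Type*} [AddCommGroup V] [Module ℝ V]
    [FiniteDimensional ℝ V] {h k : ℕ} {α₁ α₂ : V →ₗ[ℝ] ℝ} {β₁ β₂ : V [⋀^Fin 2]→ₗ[ℝ] ℝ}
    (hcp : IsLinearContactPair h k α₁ α₂ β₁ β₂) (hdim : finrank ℝ V = 2 * h + 2 * k + 2) {v : V}
    (hα₁ : α₁ v = 0) (hα₂ : α₂ v = 0) (hβ₁ : β₁.curryLeft v = 0) (hβ₂ : β₂.curryLeft v = 0) :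
    v = 0 :=
  eq_zero_of_mem_formKer hcp.top_ne_zero (by omega) <|
    wedge_mem_formKer (mem_formKer_oneForm hα₁) <| wedge_mem_formKer (mem_formKer_wpow hβ₁ h) <|
      wedge_mem_formKer (mem_formKer_oneForm hα₂) (mem_formKer_wpow hβ₂ k)

/-- The splittings `V = G₁ ⊕ G₂ ⊕ ℝZ₁ ⊕ ℝZ₂`, `F₁ = G₁ ⊕ ℝZ₂` and `F₂ = G₂ ⊕ ℝZ₁`
associated with a linear contact pair with Reeb vectors `Z₁, Z₂`. -/
theorem contact_pair_splittings {V : Type*} [AddCommGroup V] [Module ℝ V]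
    [FiniteDimensional ℝ V] (h k : ℕ) (hdim : Module.finrank ℝ V = 2 * h + 2 * k + 2)
    (α₁ α₂ : V →ₗ[ℝ] ℝ) (β₁ β₂ : V [⋀^Fin 2]→ₗ[ℝ] ℝ)
    (hcp : IsLinearContactPair h k α₁ α₂ β₁ β₂)
    (Z₁ Z₂ : V) (hZ : IsReebPair α₁ α₂ β₁ β₂ Z₁ Z₂)
    (F₁ F₂ G₁ G₂ : Submodule ℝ V)
    (hF₁ : F₁ = LinearMap.ker α₁ ⊓ LinearMap.ker β₁.curryLeft)
    (hF₂ : F₂ = LinearMap.ker α₂ ⊓ LinearMap.ker β₂.curryLeft)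
    (hG₁ : G₁ = LinearMap.ker β₁.curryLeft ⊓ LinearMap.ker α₁ ⊓ LinearMap.ker α₂)
    (hG₂ : G₂ = LinearMap.ker β₂.curryLeft ⊓ LinearMap.ker α₁ ⊓ LinearMap.ker α₂) :
    DirectSum.IsInternal ![G₁, G₂, Submodule.span ℝ {Z₁}, Submodule.span ℝ {Z₂}] ∧
      (F₁ = G₁ ⊔ Submodule.span ℝ {Z₂} ∧ Disjoint G₁ (Submodule.span ℝ {Z₂})) ∧
      (F₂ = G₂ ⊔ Submodule.span ℝ {Z₁} ∧ Disjoint G₂ (Submodule.span ℝ {Z₁})) := by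
  obtain ⟨h₁₁, h₂₂, h₁₂, h₂₁, hβ₁Z₁, hβ₂Z₁, hβ₁Z₂, hβ₂Z₂⟩ := hZ
  have hG₁F₁ : G₁ = F₁ ⊓ LinearMap.ker α₂ := by rw [hG₁, hF₁, inf_comm (LinearMap.ker _)]
  have hG₂F₂ : G₂ = F₂ ⊓ LinearMap.ker α₁ := by rw [hG₂, hF₂]; ac_rfl
  rw [inf_assoc] at hG₁ hG₂
  have hdisj : Disjoint G₁ G₂ := by
    rw [hG₁, hG₂, Submodule.disjoint_def]
    rintro v ⟨hvβ₁, hvα₁, hvα₂⟩ ⟨hvβ₂, -⟩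
    exact hcp.eq_zero_of_apply_eq_zero hdim hvα₁ hvα₂ hvβ₁ hvβ₂
  have hsup : G₁ ⊔ G₂ = LinearMap.ker α₁ ⊓ LinearMap.ker α₂ := by
    refine sup_eq_of_disjoint_of_finrank_le (hG₁ ▸ inf_le_right) (hG₂ ▸ inf_le_right) hdisj ?_
    have := finrank_ker_inf_ker_add_two h₁₁ h₂₂ h₁₂ h₂₁
    have := hG₁ ▸ finrank_le_finrank_ker_curryLeft_inf_add hcp.pow_fst
      (LinearMap.ker α₁ ⊓ LinearMap.ker α₂)
    have := hG₂ ▸ finrank_le_finrank_ker_curryLeft_inf_add hcp.pow_snd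
      (LinearMap.ker α₁ ⊓ LinearMap.ker α₂)
    omega
  refine ⟨isInternal_of_sup_eq_ker_inf_ker h₁₁ h₂₂ h₁₂ h₂₁ hdisj hsup, ⟨?_, ?_⟩, ⟨?_, ?_⟩⟩
  · rw [hG₁F₁, inf_ker_sup_span_singleton_eq (hF₁ ▸ ⟨h₁₂, hβ₁Z₂⟩) h₂₂]
  · exact (disjoint_ker_span_singleton h₂₂).mono_left (hG₁F₁ ▸ inf_le_right)
  · rw [hG₂F₂, inf_ker_sup_span_singleton_eq (hF₂ ▸ ⟨h₂₁, hβ₂Z₁⟩) h₁₁]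
  · exact (disjoint_ker_span_singleton h₁₁).mono_left (hG₂F₂ ▸ inf_le_right)
end

section
/- Let (α₁, α₂, β₁, β₂) be a linear contact pair of type (h,k) on a real vector space V of dimension 2h+2k+2 with Reeb vectors Z₁, Z₂, and let φ : V → V be a linear map with φ² = −Id + α₁ ⊗ Z₁ + α₂ ⊗ Z₂ and φ(Z₁) = φ(Z₂) = 0. Set F₁ = ker α₁ ∩ ker β₁, F₂ = ker α₂ ∩ ker β₂, G₁ = ker β₁ ∩ ker α₁ ∩ ker α₂ and G₂ = ker β₂ ∩ ker α₁ ∩ ker α₂. Then φ(F₁) ⊆ F₁ and φ(F₂) ⊆ F₂ (φ is decomposable) if and only if φ(G₁) = G₁ and φ(G₂) = G₂. -/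
open scoped TensorProduct

/-- `φ` is decomposable (preserves `F₁` and `F₂`) if and only if `φ(G₁) = G₁` and
`φ(G₂) = G₂`. -/
theorem decomposable_iff_maps_G {V : Type*} [AddCommGroup V] [Module ℝ V]
    [FiniteDimensional ℝ V] (h k : ℕ) (hdim : Module.finrank ℝ V = 2 * h + 2 * k + 2)
    (α₁ α₂ : V →ₗ[ℝ] ℝ) (β₁ β₂ : V [⋀^Fin 2]→ₗ[ℝ] ℝ)
    (hcp : IsLinearContactPair h k α₁ α₂ β₁ β₂)
    (Z₁ Z₂ : V) (hZ : IsReebPair α₁ α₂ β₁ β₂ Z₁ Z₂)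
    (φ : V →ₗ[ℝ] V)
    (hφsq : ∀ X : V, φ (φ X) = -X + α₁ X • Z₁ + α₂ X • Z₂)
    (hφZ₁ : φ Z₁ = 0) (hφZ₂ : φ Z₂ = 0)
    (F₁ F₂ G₁ G₂ : Submodule ℝ V)
    (hF₁ : F₁ = LinearMap.ker α₁ ⊓ LinearMap.ker β₁.curryLeft)
    (hF₂ : F₂ = LinearMap.ker α₂ ⊓ LinearMap.ker β₂.curryLeft)
    (hG₁ : G₁ = LinearMap.ker β₁.curryLeft ⊓ LinearMap.ker α₁ ⊓ LinearMap.ker α₂)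
    (hG₂ : G₂ = LinearMap.ker β₂.curryLeft ⊓ LinearMap.ker α₁ ⊓ LinearMap.ker α₂) :
    ((∀ x ∈ F₁, φ x ∈ F₁) ∧ ∀ x ∈ F₂, φ x ∈ F₂) ↔
      (Submodule.map φ G₁ = G₁ ∧ Submodule.map φ G₂ = G₂) := by
 
  obtain ⟨hZ11, hZ22, hZ12, hZ21, hb11, hb21, hb12, hb22⟩ := hZ
  have key : ∀ x : V, α₁ x = 0 → α₂ x = 0 → α₁ (φ x) = 0 ∧ α₂ (φ x) = 0 := by
    intro x h1 h2
    have e2 : φ (φ (φ x)) = -φ x := by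
      have hh := congrArg φ (hφsq x)
      rw [h1, h2] at hh
      simpa using hh
    have e1 := hφsq (φ x)
    have e3 : α₁ (φ x) • Z₁ + α₂ (φ x) • Z₂ = 0 := by
      have hh := e1.symm.trans e2
      rwa [add_assoc, add_eq_left] at hh
    constructor
    · have := congrArg α₁ e3
      simpa [hZ11, hZ12] using this
    · have := congrArg α₂ e3
      simpa [hZ21, hZ22] using this
  have memF₁ : ∀ x, x ∈ F₁ ↔ α₁ x = 0 ∧ β₁.curryLeft x = 0 := by
    intro x; rw [hF₁]; simp [Submodule.mem_inf, LinearMap.mem_ker]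
  have memF₂ : ∀ x, x ∈ F₂ ↔ α₂ x = 0 ∧ β₂.curryLeft x = 0 := by
    intro x; rw [hF₂]; simp [Submodule.mem_inf, LinearMap.mem_ker]
  have memG₁ : ∀ x, x ∈ G₁ ↔ β₁.curryLeft x = 0 ∧ α₁ x = 0 ∧ α₂ x = 0 := by
    intro x; rw [hG₁]; simp [Submodule.mem_inf, LinearMap.mem_ker, and_assoc]
  have memG₂ : ∀ x, x ∈ G₂ ↔ β₂.curryLeft x = 0 ∧ α₁ x = 0 ∧ α₂ x = 0 := by
    intro x; rw [hG₂]; simp [Submodule.mem_inf, LinearMap.mem_ker, and_assoc]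
  have sq : ∀ x : V, α₁ x = 0 → α₂ x = 0 → φ (φ x) = -x := by
    intro x h1 h2
    have := hφsq x
    rw [h1, h2] at this
    simpa using this
  constructor
  · rintro ⟨hf1, hf2⟩
    constructor
    · apply le_antisymm
      · intro y hy
        rw [Submodule.mem_map] at hy
        obtain ⟨x, hx, rfl⟩ := hy
        rw [memG₁] at hx ⊢
        obtain ⟨hb, h1, h2⟩ := hx
        have hF : φ x ∈ F₁ := hf1 x ((memF₁ x).2 ⟨h1, hb⟩)
        obtain ⟨_, hb'⟩ := (memF₁ _).1 hF
        exact ⟨hb', (key x h1 h2).1, (key x h1 h2).2⟩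
      · intro x hx
        rw [memG₁] at hx
        obtain ⟨hb, h1, h2⟩ := hx
        refine Submodule.mem_map.2 ⟨-φ x, ?_, ?_⟩
        · have hF : φ x ∈ F₁ := hf1 x ((memF₁ x).2 ⟨h1, hb⟩)
          obtain ⟨_, hb'⟩ := (memF₁ _).1 hF
          obtain ⟨k1, k2⟩ := key x h1 h2
          rw [memG₁]
          simp [map_neg, hb', k1, k2]
        · rw [map_neg, sq x h1 h2, neg_neg]
    · apply le_antisymm
      · intro y hy
        rw [Submodule.mem_map] at hy
        obtain ⟨x, hx, rfl⟩ := hy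
        rw [memG₂] at hx ⊢
        obtain ⟨hb, h1, h2⟩ := hx
        have hF : φ x ∈ F₂ := hf2 x ((memF₂ x).2 ⟨h2, hb⟩)
        obtain ⟨_, hb'⟩ := (memF₂ _).1 hF
        exact ⟨hb', (key x h1 h2).1, (key x h1 h2).2⟩
      · intro x hx
        rw [memG₂] at hx
        obtain ⟨hb, h1, h2⟩ := hx
        refine Submodule.mem_map.2 ⟨-φ x, ?_, ?_⟩
        · have hF : φ x ∈ F₂ := hf2 x ((memF₂ x).2 ⟨h2, hb⟩)
          obtain ⟨_, hb'⟩ := (memF₂ _).1 hF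
          obtain ⟨k1, k2⟩ := key x h1 h2
          rw [memG₂]
          simp [map_neg, hb', k1, k2]
        · rw [map_neg, sq x h1 h2, neg_neg]
  · rintro ⟨hg1, hg2⟩
    constructor
    · intro x hx
      rw [memF₁] at hx
      obtain ⟨h1, hb⟩ := hx
      have hy : x - α₂ x • Z₂ ∈ G₁ := (memG₁ _).2
        ⟨by simp [map_sub, map_smul, hb, hb12],
         by simp [map_sub, map_smul, h1, hZ12],
         by simp [map_sub, map_smul, hZ22]⟩
      have hmem : φ (x - α₂ x • Z₂) ∈ G₁ := hg1 ▸ Submodule.mem_map_of_mem hy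
      have hφeq : φ (x - α₂ x • Z₂) = φ x := by simp [map_sub, map_smul, hφZ₂]
      rw [hφeq, memG₁] at hmem
      exact (memF₁ _).2 ⟨hmem.2.1, hmem.1⟩
    · intro x hx
      rw [memF₂] at hx
      obtain ⟨h2, hb⟩ := hx
      have hy : x - α₁ x • Z₁ ∈ G₂ := (memG₂ _).2
        ⟨by simp [map_sub, map_smul, hb, hb21],
         by simp [map_sub, map_smul, hZ11],
         by simp [map_sub, map_smul, h2, hZ21]⟩
      have hmem : φ (x - α₁ x • Z₁) ∈ G₂ := hg2 ▸ Submodule.mem_map_of_mem hy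
      have hφeq : φ (x - α₁ x • Z₁) = φ x := by simp [map_sub, map_smul, hφZ₁]
      rw [hφeq, memG₂] at hmem
      exact (memF₂ _).2 ⟨hmem.2.2, hmem.1⟩
end

section
/- Let (α₁, α₂, β₁, β₂) be a linear contact pair of type (h,k) on a real vector space V of dimension 2h+2k+2 with Reeb vectors Z₁, Z₂, let φ : V → V be a linear map with φ² = −Id + α₁ ⊗ Z₁ + α₂ ⊗ Z₂ and φ(Z₁) = φ(Z₂) = 0, and let g be an inner product on V satisfying the compatibility condition g(φX, φY) = g(X, Y) − α₁(X)α₁(Y) − α₂(X)α₂(Y) for all X, Y ∈ V. Then V admits a g-orthonormal basis of the form {Z₁, Z₂, X₁, φX₁, …, X_{h+k}, φX_{h+k}} (a φ-basis). -/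
open scoped TensorProduct

/-!
Since `φ` kills `Z₁` and `Z₂`, compatibility gives `g(X, Zᵢ) = αᵢ(X)`: the Reeb vectors are
orthonormal and orthogonal to the horizontal space `D = ker α₁ ∩ ker α₂`, of dimension
`2(h + k)`. On `D`, `φ` is a `g`-orthogonal complex structure. For a unit vector `X ∈ D`, the
`g`-orthogonal complement of the plane `span {X, φX}` in `D` is again `φ`-invariant, so induction on
the dimension yields `X₁, …, X_{h+k}`.
-/

open Module LinearMap

theorem finrank_inf_ker_inf_ker_add_two {K W : Type*} [Field K] [AddCommGroup W] [Module K W]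
    [FiniteDimensional K W] (S : Submodule K W) (f₁ f₂ : W →ₗ[K] K) {u₁ u₂ : W}
    (hu₁ : u₁ ∈ S) (hu₂ : u₂ ∈ S) (h₁₁ : f₁ u₁ = 1) (h₁₂ : f₁ u₂ = 0) (h₂₁ : f₂ u₁ = 0)
    (h₂₂ : f₂ u₂ = 1) :
    finrank K ↥(S ⊓ ker f₁ ⊓ ker f₂) + 2 = finrank K S := by
  set B : S →ₗ[K] K × K := (f₁.prod f₂).comp S.subtype
  have hB : Function.Surjective B := fun p =>
    ⟨⟨p.1 • u₁ + p.2 • u₂, S.add_mem (S.smul_mem _ hu₁) (S.smul_mem _ hu₂)⟩,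
      by simp [B, h₁₁, h₁₂, h₂₁, h₂₂]⟩
  have hker : (ker B).map S.subtype = S ⊓ ker f₁ ⊓ ker f₂ := by
    rw [ker_comp, Submodule.map_comap_subtype, ker_prod, inf_assoc]
  have hrank := finrank_range_add_finrank_ker B
  rw [range_eq_top.mpr hB, finrank_top, finrank_prod, finrank_self] at hrank
  rw [← hker, ← (S.equivSubtypeMap (ker B)).finrank_eq]
  omega

theorem exists_basis_coe_eq_of_orthonormal {K V ι : Type*} [Field K] [AddCommGroup V]
    [Module K V] [FiniteDimensional K V] [Fintype ι] [DecidableEq ι] {G : V →ₗ[K] V →ₗ[K] K}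
    {v : ι → V} (hv : ∀ i j, G (v i) (v j) = if i = j then 1 else 0)
    (hcard : Fintype.card ι = finrank K V) : ∃ b : Basis ι K V, ⇑b = v := by
  have hli : LinearIndependent K v :=
    BilinForm.linearIndependent_of_iIsOrtho (B := G)
      (BilinForm.iIsOrtho_def.mpr fun i j hij => by simp [hv, hij]) (fun i => by simp [hv])
  exact ⟨Basis.mk hli (hli.span_eq_top_of_card_eq_finrank' hcard).ge, Basis.coe_mk _ _⟩

section ComplexStructure

variable {W : Type*} [AddCommGroup W] [Module ℝ W]

structure IsCompatibleComplexStructureOn (G : W →ₗ[ℝ] W →ₗ[ℝ] ℝ) (J : W →ₗ[ℝ] W)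
    (S : Submodule ℝ W) : Prop where
  mapsTo : ∀ x ∈ S, J x ∈ S
  sq_eq_neg : ∀ x ∈ S, J (J x) = -x
  isometry : ∀ x ∈ S, ∀ y ∈ S, G (J x) (J y) = G x y

theorem IsInnerProduct.exists_mem_apply_self_eq_one {G : W →ₗ[ℝ] W →ₗ[ℝ] ℝ}
    (hG : IsInnerProduct G) {S : Submodule ℝ W} (hS : S ≠ ⊥) : ∃ x ∈ S, G x x = 1 := by
  obtain ⟨x, hxS, hx⟩ := Submodule.exists_mem_ne_zero_of_ne_bot hS
  have hpos := hG.2 x hx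
  refine ⟨(√(G x x))⁻¹ • x, S.smul_mem _ hxS, ?_⟩
  simp only [map_smul, LinearMap.smul_apply, smul_eq_mul]
  field_simp
  exact (Real.sq_sqrt hpos.le).symm

namespace IsCompatibleComplexStructureOn

variable {G : W →ₗ[ℝ] W →ₗ[ℝ] ℝ} {J : W →ₗ[ℝ] W} {S : Submodule ℝ W}

theorem apply_map_left (hJ : IsCompatibleComplexStructureOn G J S) {x y : W} (hx : x ∈ S)
    (hy : y ∈ S) : G (J x) y = -G x (J y) := by
  have := hJ.isometry x hx (J y) (hJ.mapsTo y hy)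
  rw [hJ.sq_eq_neg y hy, map_neg] at this
  linarith

theorem apply_map_self (hJ : IsCompatibleComplexStructureOn G J S) (hsym : ∀ x y, G x y = G y x)
    {x : W} (hx : x ∈ S) : G x (J x) = 0 := by
  have := hJ.apply_map_left hx hx
  rw [hsym] at this
  linarith

theorem inf_ker (hJ : IsCompatibleComplexStructureOn G J S) (x₀ : W) (hx₀ : x₀ ∈ S) :
    IsCompatibleComplexStructureOn G J (S ⊓ ker (G x₀) ⊓ ker (G (J x₀))) where
  mapsTo y hy := by
    obtain ⟨⟨hyS, hy₁⟩, hy₂⟩ := hy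
    refine ⟨⟨hJ.mapsTo y hyS, ?_⟩, ?_⟩
    · show G x₀ (J y) = 0
      have hy₂ : G (J x₀) y = 0 := hy₂
      linarith [hJ.apply_map_left hx₀ hyS]
    · show G (J x₀) (J y) = 0
      rw [hJ.isometry x₀ hx₀ y hyS]
      exact hy₁
  sq_eq_neg y hy := hJ.sq_eq_neg y hy.1.1
  isometry x hx y hy := hJ.isometry x hx.1.1 y hy.1.1

theorem exists_orthonormal_family [FiniteDimensional ℝ W] (hG : IsInnerProduct G) {m : ℕ}
    (hJ : IsCompatibleComplexStructureOn G J S) (hS : finrank ℝ S = 2 * m) :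
    ∃ X : Fin m → W, (∀ i, X i ∈ S) ∧ (∀ i j, G (X i) (X j) = if i = j then 1 else 0) ∧
      ∀ i j, G (X i) (J (X j)) = 0 := by
  induction m generalizing S with
  | zero => exact ⟨Fin.elim0, Fin.rec0, Fin.rec0, Fin.rec0⟩
  | succ m ih =>
    obtain ⟨x₀, hx₀S, hx₀⟩ := hG.exists_mem_apply_self_eq_one (S := S) (by rintro rfl; simp at hS)
    have hJx₀S := hJ.mapsTo x₀ hx₀S
    have hx₀J : G x₀ (J x₀) = 0 := hJ.apply_map_self hG.1 hx₀S
    have hJx₀ : G (J x₀) x₀ = 0 := by rw [hG.1]; exact hx₀J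
    have hJJ : G (J x₀) (J x₀) = 1 := by rw [hJ.isometry x₀ hx₀S x₀ hx₀S, hx₀]
    have hS' : finrank ℝ ↥(S ⊓ ker (G x₀) ⊓ ker (G (J x₀))) = 2 * m := by
      have := finrank_inf_ker_inf_ker_add_two S (G x₀) (G (J x₀)) hx₀S hJx₀S hx₀ hx₀J hJx₀ hJJ
      omega
    have hJ' := hJ.inf_ker x₀ hx₀S
    obtain ⟨X, hXS', hXX, hXJX⟩ := ih hJ' hS'
    have h₁ : ∀ i, G x₀ (X i) = 0 := fun i => (hXS' i).1.2
    have h₂ : ∀ i, G (J x₀) (X i) = 0 := fun i => (hXS' i).2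
    have h₃ : ∀ i, G x₀ (J (X i)) = 0 := fun i => (hJ'.mapsTo _ (hXS' i)).1.2
    refine ⟨Fin.cons x₀ X, Fin.cases hx₀S fun i => (hXS' i).1.1, ?_, ?_⟩
    · intro i j
      cases i using Fin.cases <;> cases j using Fin.cases <;>
        simp [hx₀, h₁, hXX, hG.1 _ x₀, Fin.succ_ne_zero, (Fin.succ_ne_zero _).symm]
    · intro i j
      cases i using Fin.cases <;> cases j using Fin.cases <;>
        simp [hx₀J, h₃, hXJX, hG.1 _ (J x₀), h₂]

end IsCompatibleComplexStructureOn

end ComplexStructure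

section AlmostContactPair

variable {V : Type*} [AddCommGroup V] [Module ℝ V]

structure IsAlmostContactPairMetric (α₁ α₂ : V →ₗ[ℝ] ℝ) (Z₁ Z₂ : V) (φ : V →ₗ[ℝ] V)
    (g : V →ₗ[ℝ] V →ₗ[ℝ] ℝ) : Prop where
  fst_fst : α₁ Z₁ = 1
  snd_snd : α₂ Z₂ = 1
  fst_snd : α₁ Z₂ = 0
  snd_fst : α₂ Z₁ = 0
  sq : ∀ X, φ (φ X) = -X + α₁ X • Z₁ + α₂ X • Z₂
  map_fst : φ Z₁ = 0
  map_snd : φ Z₂ = 0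
  isInnerProduct : IsInnerProduct g
  compat : ∀ X Y, g (φ X) (φ Y) = g X Y - α₁ X * α₁ Y - α₂ X * α₂ Y

def phiFamily {n : ℕ} (Z₁ Z₂ : V) (φ : V →ₗ[ℝ] V) (X : Fin n → V) :
    Fin 2 ⊕ Fin n × Fin 2 → V :=
  Sum.elim ![Z₁, Z₂] fun p => ![X p.1, φ (X p.1)] p.2

namespace IsAlmostContactPairMetric

variable {α₁ α₂ : V →ₗ[ℝ] ℝ} {Z₁ Z₂ : V} {φ : V →ₗ[ℝ] V} {g : V →ₗ[ℝ] V →ₗ[ℝ] ℝ}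

theorem fst_map_eq_zero_and_snd_map_eq_zero (hM : IsAlmostContactPairMetric α₁ α₂ Z₁ Z₂ φ g)
    (X : V) : α₁ (φ X) = 0 ∧ α₂ (φ X) = 0 := by
  have hcube : φ (φ (φ X)) = -φ X := by simp [hM.sq X, hM.map_fst, hM.map_snd]
  have h := hM.sq (φ X)
  rw [hcube, add_assoc, left_eq_add] at h
  have h₁ := congrArg α₁ h
  have h₂ := congrArg α₂ h
  simp only [map_add, map_smul, smul_eq_mul, map_zero, hM.fst_fst, hM.fst_snd, hM.snd_fst,
    hM.snd_snd] at h₁ h₂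
  constructor <;> linarith

theorem fst_map (hM : IsAlmostContactPairMetric α₁ α₂ Z₁ Z₂ φ g) (X : V) : α₁ (φ X) = 0 :=
  (hM.fst_map_eq_zero_and_snd_map_eq_zero X).1

theorem snd_map (hM : IsAlmostContactPairMetric α₁ α₂ Z₁ Z₂ φ g) (X : V) : α₂ (φ X) = 0 :=
  (hM.fst_map_eq_zero_and_snd_map_eq_zero X).2

theorem apply_eq_of_map_eq_zero (hM : IsAlmostContactPairMetric α₁ α₂ Z₁ Z₂ φ g) {Z : V}
    (hZ : φ Z = 0) (X : V) : g X Z = α₁ X * α₁ Z + α₂ X * α₂ Z := by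
  have := hM.compat X Z
  rw [hZ, map_zero] at this
  linarith

theorem apply_fst (hM : IsAlmostContactPairMetric α₁ α₂ Z₁ Z₂ φ g) (X : V) : g X Z₁ = α₁ X := by
  simp [hM.apply_eq_of_map_eq_zero hM.map_fst, hM.fst_fst, hM.snd_fst]

theorem apply_snd (hM : IsAlmostContactPairMetric α₁ α₂ Z₁ Z₂ φ g) (X : V) : g X Z₂ = α₂ X := by
  simp [hM.apply_eq_of_map_eq_zero hM.map_snd, hM.fst_snd, hM.snd_snd]

theorem fst_apply (hM : IsAlmostContactPairMetric α₁ α₂ Z₁ Z₂ φ g) (X : V) : g Z₁ X = α₁ X := by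
  rw [hM.isInnerProduct.1, hM.apply_fst]

theorem snd_apply (hM : IsAlmostContactPairMetric α₁ α₂ Z₁ Z₂ φ g) (X : V) : g Z₂ X = α₂ X := by
  rw [hM.isInnerProduct.1, hM.apply_snd]

theorem isCompatibleComplexStructureOn (hM : IsAlmostContactPairMetric α₁ α₂ Z₁ Z₂ φ g) :
    IsCompatibleComplexStructureOn g φ (ker α₁ ⊓ ker α₂) where
  mapsTo X _ := ⟨hM.fst_map X, hM.snd_map X⟩
  sq_eq_neg X hX := by simp [hM.sq X, show α₁ X = 0 from hX.1, show α₂ X = 0 from hX.2]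
  isometry X hX Y _ := by simp [hM.compat X Y, show α₁ X = 0 from hX.1, show α₂ X = 0 from hX.2]

theorem finrank_ker_inf_ker_add_two [FiniteDimensional ℝ V]
    (hM : IsAlmostContactPairMetric α₁ α₂ Z₁ Z₂ φ g) :
    finrank ℝ ↥(ker α₁ ⊓ ker α₂) + 2 = finrank ℝ V := by
  have := finrank_inf_ker_inf_ker_add_two ⊤ α₁ α₂ Submodule.mem_top Submodule.mem_top
    hM.fst_fst hM.fst_snd hM.snd_fst hM.snd_snd
  rwa [top_inf_eq, finrank_top] at this

theorem phiFamily_orthonormal (hM : IsAlmostContactPairMetric α₁ α₂ Z₁ Z₂ φ g) {n : ℕ}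
    {X : Fin n → V} (hXker : ∀ i, X i ∈ ker α₁ ⊓ ker α₂)
    (hXX : ∀ i j, g (X i) (X j) = if i = j then 1 else 0) (hXφX : ∀ i j, g (X i) (φ (X j)) = 0)
    (i j : Fin 2 ⊕ Fin n × Fin 2) :
    g (phiFamily Z₁ Z₂ φ X i) (phiFamily Z₁ Z₂ φ X j) = if i = j then 1 else 0 := by
  have hX₁ (i : Fin n) : α₁ (X i) = 0 := (hXker i).1
  have hX₂ (i : Fin n) : α₂ (X i) = 0 := (hXker i).2
  have hφXX (i j : Fin n) : g (φ (X i)) (X j) = 0 := by rw [hM.isInnerProduct.1, hXφX]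
  have hφXφX (i j : Fin n) : g (φ (X i)) (φ (X j)) = if i = j then 1 else 0 := by
    rw [hM.compat, hX₁, hX₂, hXX]
    ring
  rcases i with i | ⟨i, a⟩ <;> rcases j with j | ⟨j, c⟩
  · fin_cases i <;> fin_cases j <;>
      simp [phiFamily, hM.apply_fst, hM.apply_snd, hM.fst_fst, hM.fst_snd, hM.snd_fst, hM.snd_snd]
  · fin_cases i <;> fin_cases c <;>
      simp [phiFamily, hM.fst_apply, hM.snd_apply, hX₁, hX₂, hM.fst_map, hM.snd_map]
  · fin_cases a <;> fin_cases j <;>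
      simp [phiFamily, hM.apply_fst, hM.apply_snd, hX₁, hX₂, hM.fst_map, hM.snd_map]
  · fin_cases a <;> fin_cases c <;>
      simp [phiFamily, hXX, hXφX, hφXX, hφXφX, Prod.ext_iff]

end IsAlmostContactPairMetric

end AlmostContactPair

theorem exists_phi_basis_general {V : Type*} [AddCommGroup V] [Module ℝ V]
    [FiniteDimensional ℝ V] (h k : ℕ) (hdim : Module.finrank ℝ V = 2 * h + 2 * k + 2)
    (α₁ α₂ : V →ₗ[ℝ] ℝ) (β₁ β₂ : V [⋀^Fin 2]→ₗ[ℝ] ℝ)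
    (Z₁ Z₂ : V) (hZ : IsReebPair α₁ α₂ β₁ β₂ Z₁ Z₂)
    (φ : V →ₗ[ℝ] V)
    (hφsq : ∀ X : V, φ (φ X) = -X + α₁ X • Z₁ + α₂ X • Z₂)
    (hφZ₁ : φ Z₁ = 0) (hφZ₂ : φ Z₂ = 0)
    (g : V →ₗ[ℝ] V →ₗ[ℝ] ℝ) (hg : IsInnerProduct g)
    (hcompat : ∀ X Y : V, g (φ X) (φ Y) = g X Y - α₁ X * α₁ Y - α₂ X * α₂ Y) :
    ∃ (X : Fin (h + k) → V) (b : Module.Basis (Fin 2 ⊕ Fin (h + k) × Fin 2) ℝ V),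
      b (Sum.inl 0) = Z₁ ∧ b (Sum.inl 1) = Z₂ ∧
      (∀ i, b (Sum.inr (i, 0)) = X i) ∧ (∀ i, b (Sum.inr (i, 1)) = φ (X i)) ∧
      ∀ i j, g (b i) (b j) = if i = j then 1 else 0 := by
  obtain ⟨h₁₁, h₂₂, h₁₂, h₂₁, -⟩ := hZ
  have hM : IsAlmostContactPairMetric α₁ α₂ Z₁ Z₂ φ g :=
    ⟨h₁₁, h₂₂, h₁₂, h₂₁, hφsq, hφZ₁, hφZ₂, hg, hcompat⟩
  obtain ⟨X, hXker, hXX, hXφX⟩ :=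
    hM.isCompatibleComplexStructureOn.exists_orthonormal_family hg (m := h + k)
      (by have := hM.finrank_ker_inf_ker_add_two; omega)
  have hortho := hM.phiFamily_orthonormal hXker hXX hXφX
  obtain ⟨b, hb⟩ := exists_basis_coe_eq_of_orthonormal hortho (by simp [hdim]; omega)
  rw [← hb] at hortho
  exact ⟨X, b, by simp [hb, phiFamily], by simp [hb, phiFamily], fun i => by simp [hb, phiFamily],
    fun i => by simp [hb, phiFamily], hortho⟩

/-- Existence of a `φ`-basis: a `g`-orthonormal basis of the form
`{Z₁, Z₂, X₁, φX₁, …, X_{h+k}, φX_{h+k}}` for any compatible inner product `g`. -/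
theorem exists_phi_basis {V : Type*} [AddCommGroup V] [Module ℝ V]
    [FiniteDimensional ℝ V] (h k : ℕ) (hdim : Module.finrank ℝ V = 2 * h + 2 * k + 2)
    (α₁ α₂ : V →ₗ[ℝ] ℝ) (β₁ β₂ : V [⋀^Fin 2]→ₗ[ℝ] ℝ)
    (hcp : IsLinearContactPair h k α₁ α₂ β₁ β₂)
    (Z₁ Z₂ : V) (hZ : IsReebPair α₁ α₂ β₁ β₂ Z₁ Z₂)
    (φ : V →ₗ[ℝ] V)
    (hφsq : ∀ X : V, φ (φ X) = -X + α₁ X • Z₁ + α₂ X • Z₂)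
    (hφZ₁ : φ Z₁ = 0) (hφZ₂ : φ Z₂ = 0)
    (g : V →ₗ[ℝ] V →ₗ[ℝ] ℝ) (hg : IsInnerProduct g)
    (hcompat : ∀ X Y : V, g (φ X) (φ Y) = g X Y - α₁ X * α₁ Y - α₂ X * α₂ Y) :
    ∃ (X : Fin (h + k) → V) (b : Module.Basis (Fin 2 ⊕ Fin (h + k) × Fin 2) ℝ V),
      b (Sum.inl 0) = Z₁ ∧ b (Sum.inl 1) = Z₂ ∧
      (∀ i, b (Sum.inr (i, 0)) = X i) ∧ (∀ i, b (Sum.inr (i, 1)) = φ (X i)) ∧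
      ∀ i j, g (b i) (b j) = if i = j then 1 else 0 :=
  exists_phi_basis_general h k hdim α₁ α₂ β₁ β₂ Z₁ Z₂ hZ φ hφsq hφZ₁ hφZ₂ g hg hcompat
end

section
/- Let (α₁, α₂, β₁, β₂) be a linear contact pair of type (h,k) on a real vector space V of dimension n = 2h+2k+2 with Reeb vectors Z₁, Z₂. Suppose g and g′ are two inner products on V, each associated to the pair with a decomposable structure map: that is, there are linear maps φ, φ′ : V → V with φ² = φ′² = −Id + α₁ ⊗ Z₁ + α₂ ⊗ Z₂, φ(Zᵢ) = φ′(Zᵢ) = 0, both preserving F₁ = ker α₁ ∩ ker β₁ and F₂ = ker α₂ ∩ ker β₂, such that g(X, Zᵢ) = g′(X, Zᵢ) = αᵢ(X), g(X, φY) = (β₁+β₂)(X, Y) and g′(X, φ′Y) = (β₁+β₂)(X, Y) for all X, Y. Then g and g′ have the same volume element up to sign: for any g-orthonormal basis (e₁, …, e_n) of V, the determinant of the Gram matrix (g′(eᵢ, eⱼ)) equals 1. -/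
open scoped TensorProduct

/-!
Let `P = α₁ ⊗ Z₁ + α₂ ⊗ Z₂` be the projection onto the Reeb directions. The compatibility
conditions give `g'(X, Y) = g(X, (P - φ φ') Y)`, so in a `g`-orthonormal basis the Gram
determinant of `g'` is `det (P - φ φ')`. Since `β₁ + β₂` is alternating, `φ` is `g`-skew and
hence `αᵢ ∘ φ = 0`; together with `φ² = P - 1` and `φ P = 0` (and likewise for `φ'`) this gives
`P - φ φ' = (P - φ)(P + φ')`, where both factors square to the involution `2P - 1`. So
`det (P - φ φ')² = 1`, and the determinant is positive because `g'` is positive definite.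
-/

open Module LinearMap

theorem IsIdempotentElem.two_mul_sub_one_mul_self {R : Type*} [Ring R] {p : R}
    (hp : IsIdempotentElem p) : (2 * p - 1) * (2 * p - 1) = 1 := by
  simp only [sub_mul, mul_sub, two_mul, add_mul, mul_add, hp.eq, mul_one, one_mul]
  abel

section Determinant

variable {R M : Type*} [CommRing R] [AddCommGroup M] [Module R M]

theorem det_mul_sq_eq_one {A B S : Module.End R M} (hA : A * A = S) (hB : B * B = S)
    (hS : S * S = 1) : LinearMap.det (A * B) ^ 2 = 1 := by
  calc LinearMap.det (A * B) ^ 2 = LinearMap.det (A * A) * LinearMap.det (B * B) := by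
        simp only [map_mul]; ring
    _ = 1 := by rw [hA, hB, ← map_mul, hS, map_one]

theorem det_sub_mul_sq_eq_one {p ψ ψ' : Module.End R M} (hp : IsIdempotentElem p)
    (hψ : ψ * ψ = p - 1) (hψp : ψ * p = 0) (hpψ : p * ψ = 0)
    (hψ' : ψ' * ψ' = p - 1) (hψ'p : ψ' * p = 0) (hpψ' : p * ψ' = 0) :
    LinearMap.det (p - ψ * ψ') ^ 2 = 1 := by
  have hfactor : p - ψ * ψ' = (p - ψ) * (p + ψ') := by
    simp only [sub_mul, mul_add, hp.eq, hpψ', hψp]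
    abel
  have hsq : (p - ψ) * (p - ψ) = 2 * p - 1 := by
    simp only [sub_mul, mul_sub, hp.eq, hψ, hψp, hpψ, two_mul]
    abel
  have hsq' : (p + ψ') * (p + ψ') = 2 * p - 1 := by
    simp only [add_mul, mul_add, hp.eq, hψ', hψ'p, hpψ', two_mul]
    abel
  rw [hfactor]
  exact det_mul_sq_eq_one hsq hsq' hp.two_mul_sub_one_mul_self

end Determinant

section BilinearForm

variable {R V : Type*} [CommRing R] [AddCommGroup V] [Module R V] {g g' : V →ₗ[R] V →ₗ[R] R}

theorem apply_map_eq_neg_of_alternating (hg : ∀ x y, g x y = g y x) {φ : Module.End R V}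
    {ω : V [⋀^Fin 2]→ₗ[R] R} (hφ : ∀ X Y, g X (φ Y) = ω ![X, Y]) (X Y : V) :
    g (φ X) Y = -g X (φ Y) := by
  rw [hg, hφ, hφ, ← ω.map_swap (v := ![X, Y]) (zero_ne_one : (0 : Fin 2) ≠ 1)]
  congr 1
  ext i
  fin_cases i <;> rfl

theorem comp_eq_zero_of_alternating (hg : ∀ x y, g x y = g y x) {φ : Module.End R V}
    {ω : V [⋀^Fin 2]→ₗ[R] R} (hφ : ∀ X Y, g X (φ Y) = ω ![X, Y]) {α : V →ₗ[R] R} {Z : V}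
    (hgZ : ∀ X, g X Z = α X) (hφZ : φ Z = 0) : α ∘ₗ φ = 0 := by
  ext X
  rw [comp_apply, ← hgZ, apply_map_eq_neg_of_alternating hg hφ, hφZ, map_zero, neg_zero,
    LinearMap.zero_apply]

theorem eq_compl₂_sub_mul {p φ φ' : Module.End R V} (hp : ∀ X Y, g X (p Y) = g' X (p Y))
    (hφ : ∀ X Y, g X (φ Y) = g' X (φ' Y)) (hφ' : φ' * φ' = p - 1) :
    g' = g.compl₂ (p - φ * φ') := by
  ext X Y
  have h := congr_arg (fun f : Module.End R V => g' X (f Y)) hφ'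
  simp only [Module.End.mul_apply, LinearMap.sub_apply, Module.End.one_apply, map_sub] at h
  rw [compl₂_apply, LinearMap.sub_apply, map_sub, Module.End.mul_apply, hp, hφ, h]
  ring

end BilinearForm

section Gram

variable {V ι : Type*} [AddCommGroup V] [Module ℝ V] [Fintype ι] [DecidableEq ι]

theorem IsInnerProduct.posDef_toMatrix₂ {g : V →ₗ[ℝ] V →ₗ[ℝ] ℝ} (hg : IsInnerProduct g)
    (b : Basis ι ℝ V) : (toMatrix₂ b b g).PosDef := by
  refine .of_dotProduct_mulVec_pos ?_ fun x hx => ?_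
  · ext i j
    simp [toMatrix₂_apply, hg.1 (b i) (b j)]
  · have h := dotProduct_toMatrix₂_mulVec b b g x x
    simp only [RingHom.coe_id, Function.id_comp] at h
    rw [star_trivial, h]
    exact hg.2 _ (b.equivFun.symm.map_ne_zero_iff.2 hx)

theorem det_toMatrix₂_compl₂_of_orthonormal {g : V →ₗ[ℝ] V →ₗ[ℝ] ℝ} (b : Basis ι ℝ V)
    (hb : ∀ i j, g (b i) (b j) = if i = j then 1 else 0) (T : Module.End ℝ V) :
    (toMatrix₂ b b (g.compl₂ T)).det = LinearMap.det T := by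
  have hgram : toMatrix₂ b b g = 1 := by
    ext i j
    rw [toMatrix₂_apply, hb, Matrix.one_apply]
  rw [toMatrix₂_compl₂ b b, hgram, one_mul, det_toMatrix]

end Gram

section ReebProjection

variable {R V : Type*} [CommRing R] [AddCommGroup V] [Module R V] {α₁ α₂ : V →ₗ[R] R} {Z₁ Z₂ : V}

def reebProj (α₁ α₂ : V →ₗ[R] R) (Z₁ Z₂ : V) : Module.End R V :=
  α₁.smulRight Z₁ + α₂.smulRight Z₂

theorem reebProj_apply (X : V) : reebProj α₁ α₂ Z₁ Z₂ X = α₁ X • Z₁ + α₂ X • Z₂ := rfl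

theorem isIdempotentElem_reebProj (h₁₁ : α₁ Z₁ = 1) (h₂₂ : α₂ Z₂ = 1) (h₁₂ : α₁ Z₂ = 0)
    (h₂₁ : α₂ Z₁ = 0) : IsIdempotentElem (reebProj α₁ α₂ Z₁ Z₂) := by
  ext X
  simp [reebProj_apply, h₁₁, h₂₂, h₁₂, h₂₁]

theorem mul_reebProj_eq_zero {φ : Module.End R V} (h₁ : φ Z₁ = 0) (h₂ : φ Z₂ = 0) :
    φ * reebProj α₁ α₂ Z₁ Z₂ = 0 := by
  ext X
  simp [reebProj_apply, h₁, h₂]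

theorem reebProj_mul_eq_zero {φ : Module.End R V} (h₁ : α₁ ∘ₗ φ = 0) (h₂ : α₂ ∘ₗ φ = 0) :
    reebProj α₁ α₂ Z₁ Z₂ * φ = 0 := by
  ext X
  have h₁X : α₁ (φ X) = 0 := LinearMap.congr_fun h₁ X
  have h₂X : α₂ (φ X) = 0 := LinearMap.congr_fun h₂ X
  simp [reebProj_apply, h₁X, h₂X]

theorem mul_self_eq_reebProj_sub_one {φ : Module.End R V}
    (h : ∀ X, φ (φ X) = -X + α₁ X • Z₁ + α₂ X • Z₂) : φ * φ = reebProj α₁ α₂ Z₁ Z₂ - 1 := by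
  ext X
  rw [Module.End.mul_apply, h, LinearMap.sub_apply, reebProj_apply, Module.End.one_apply]
  abel

theorem apply_reebProj {g : V →ₗ[R] V →ₗ[R] R} (h₁ : ∀ X, g X Z₁ = α₁ X)
    (h₂ : ∀ X, g X Z₂ = α₂ X) (X Y : V) :
    g X (reebProj α₁ α₂ Z₁ Z₂ Y) = α₁ Y * α₁ X + α₂ Y * α₂ X := by
  simp [reebProj_apply, h₁, h₂]

end ReebProjection

theorem associated_metrics_same_volume_general {V : Type*} [AddCommGroup V] [Module ℝ V] (h k : ℕ)
    (α₁ α₂ : V →ₗ[ℝ] ℝ) (β₁ β₂ : V [⋀^Fin 2]→ₗ[ℝ] ℝ)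
    (Z₁ Z₂ : V) (hZ : IsReebPair α₁ α₂ β₁ β₂ Z₁ Z₂)
    (φ φ' : V →ₗ[ℝ] V)
    (hφsq : ∀ X : V, φ (φ X) = -X + α₁ X • Z₁ + α₂ X • Z₂)
    (hφ'sq : ∀ X : V, φ' (φ' X) = -X + α₁ X • Z₁ + α₂ X • Z₂)
    (hφZ₁ : φ Z₁ = 0) (hφZ₂ : φ Z₂ = 0) (hφ'Z₁ : φ' Z₁ = 0) (hφ'Z₂ : φ' Z₂ = 0)
    (g g' : V →ₗ[ℝ] V →ₗ[ℝ] ℝ) (hg : IsInnerProduct g) (hg' : IsInnerProduct g')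
    (hgZ₁ : ∀ X : V, g X Z₁ = α₁ X) (hgZ₂ : ∀ X : V, g X Z₂ = α₂ X)
    (hg'Z₁ : ∀ X : V, g' X Z₁ = α₁ X) (hg'Z₂ : ∀ X : V, g' X Z₂ = α₂ X)
    (hgφ : ∀ X Y : V, g X (φ Y) = (β₁ + β₂) ![X, Y])
    (hg'φ' : ∀ X Y : V, g' X (φ' Y) = (β₁ + β₂) ![X, Y]) :
    ∀ e : Module.Basis (Fin (2 * h + 2 * k + 2)) ℝ V,
      (∀ i j, g (e i) (e j) = if i = j then 1 else 0) →
      Matrix.det (Matrix.of fun i j => g' (e i) (e j)) = 1 := by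
  intro e he
  obtain ⟨hZ₁₁, hZ₂₂, hZ₁₂, hZ₂₁, -⟩ := hZ
  set P := reebProj α₁ α₂ Z₁ Z₂
  have hg'_eq : g' = g.compl₂ (P - φ * φ') :=
    eq_compl₂_sub_mul
      (fun X Y => by rw [apply_reebProj hgZ₁ hgZ₂, apply_reebProj hg'Z₁ hg'Z₂])
      (fun X Y => by rw [hgφ, hg'φ']) (mul_self_eq_reebProj_sub_one hφ'sq)
  have hdet_sq : LinearMap.det (P - φ * φ') ^ 2 = 1 :=
    det_sub_mul_sq_eq_one (isIdempotentElem_reebProj hZ₁₁ hZ₂₂ hZ₁₂ hZ₂₁)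
      (mul_self_eq_reebProj_sub_one hφsq) (mul_reebProj_eq_zero hφZ₁ hφZ₂)
      (reebProj_mul_eq_zero (comp_eq_zero_of_alternating hg.1 hgφ hgZ₁ hφZ₁)
        (comp_eq_zero_of_alternating hg.1 hgφ hgZ₂ hφZ₂))
      (mul_self_eq_reebProj_sub_one hφ'sq) (mul_reebProj_eq_zero hφ'Z₁ hφ'Z₂)
      (reebProj_mul_eq_zero (comp_eq_zero_of_alternating hg'.1 hg'φ' hg'Z₁ hφ'Z₁)
        (comp_eq_zero_of_alternating hg'.1 hg'φ' hg'Z₂ hφ'Z₂))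
  have hgram : Matrix.of (fun i j => g' (e i) (e j)) = toMatrix₂ e e g' :=
    Matrix.ext fun i j => (toMatrix₂_apply e e g' i j).symm
  have hdet : (toMatrix₂ e e g').det = LinearMap.det (P - φ * φ') := by
    rw [hg'_eq, det_toMatrix₂_compl₂_of_orthonormal e he]
  have hdet_pos : 0 < LinearMap.det (P - φ * φ') := hdet ▸ (hg'.posDef_toMatrix₂ e).det_pos
  rw [hgram, hdet]
  exact (pow_eq_one_iff_of_nonneg hdet_pos.le two_ne_zero).1 hdet_sq

/-- Any two inner products associated to a given linear contact pair with decomposable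
structure maps have the same volume element: the Gram matrix of `g'` in a `g`-orthonormal
basis has determinant `1`. -/
theorem associated_metrics_same_volume {V : Type*} [AddCommGroup V] [Module ℝ V]
    [FiniteDimensional ℝ V] (h k : ℕ) (hdim : Module.finrank ℝ V = 2 * h + 2 * k + 2)
    (α₁ α₂ : V →ₗ[ℝ] ℝ) (β₁ β₂ : V [⋀^Fin 2]→ₗ[ℝ] ℝ)
    (hcp : IsLinearContactPair h k α₁ α₂ β₁ β₂)
    (Z₁ Z₂ : V) (hZ : IsReebPair α₁ α₂ β₁ β₂ Z₁ Z₂)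
    (F₁ F₂ : Submodule ℝ V)
    (hF₁ : F₁ = LinearMap.ker α₁ ⊓ LinearMap.ker β₁.curryLeft)
    (hF₂ : F₂ = LinearMap.ker α₂ ⊓ LinearMap.ker β₂.curryLeft)
    (φ φ' : V →ₗ[ℝ] V)
    (hφsq : ∀ X : V, φ (φ X) = -X + α₁ X • Z₁ + α₂ X • Z₂)
    (hφ'sq : ∀ X : V, φ' (φ' X) = -X + α₁ X • Z₁ + α₂ X • Z₂)
    (hφZ₁ : φ Z₁ = 0) (hφZ₂ : φ Z₂ = 0) (hφ'Z₁ : φ' Z₁ = 0) (hφ'Z₂ : φ' Z₂ = 0)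
    (hφF₁ : ∀ x ∈ F₁, φ x ∈ F₁) (hφF₂ : ∀ x ∈ F₂, φ x ∈ F₂)
    (hφ'F₁ : ∀ x ∈ F₁, φ' x ∈ F₁) (hφ'F₂ : ∀ x ∈ F₂, φ' x ∈ F₂)
    (g g' : V →ₗ[ℝ] V →ₗ[ℝ] ℝ) (hg : IsInnerProduct g) (hg' : IsInnerProduct g')
    (hgZ₁ : ∀ X : V, g X Z₁ = α₁ X) (hgZ₂ : ∀ X : V, g X Z₂ = α₂ X)
    (hg'Z₁ : ∀ X : V, g' X Z₁ = α₁ X) (hg'Z₂ : ∀ X : V, g' X Z₂ = α₂ X)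
    (hgφ : ∀ X Y : V, g X (φ Y) = (β₁ + β₂) ![X, Y])
    (hg'φ' : ∀ X Y : V, g' X (φ' Y) = (β₁ + β₂) ![X, Y]) :
    ∀ e : Module.Basis (Fin (2 * h + 2 * k + 2)) ℝ V,
      (∀ i j, g (e i) (e j) = if i = j then 1 else 0) →
      Matrix.det (Matrix.of fun i j => g' (e i) (e j)) = 1 :=
  associated_metrics_same_volume_general h k α₁ α₂ β₁ β₂ Z₁ Z₂ hZ φ φ' hφsq hφ'sq hφZ₁ hφZ₂ hφ'Z₁
    hφ'Z₂ g g' hg hg' hgZ₁ hgZ₂ hg'Z₁ hg'Z₂ hgφ hg'φ'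
end
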